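/- arXiv:1404.0760 — 2 statements merged into one kernel-verified Lean document; each statement's English description precedes it below -/
import Mathlib

section
/- Lemma 2 (decomposition of feedback channel flow): Suppose random variables x_0, y_1,...,y_n, e_1,...,e_n satisfy, for each i, the conditional independence H(e_i | e^{i-1}, y^i) = H(e_i | e^{i-1}, y^i, x_0), i.e., I(x_0; e_i | e^{i-1}, y^i) = 0. Then I(y^n → e^n) = I(x_0; e^n) + I(y^n → e^n | x_0), where I(y^n → e^n | x_0) := Σ_{i=1}^n I(y^i; e_i | e^{i-1}, x_0). -/
open scoped BigOperators

/-- Distribution of a finite-valued random variable `X` under pmf `p`. -/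
noncomputable def rvDist {Ω A : Type*} [Fintype Ω] [Fintype A] [DecidableEq A]
    (p : Ω → ℝ) (X : Ω → A) (a : A) : ℝ := ∑ ω, if X ω = a then p ω else 0

/-- Shannon entropy `H(X)`. -/
noncomputable def ent {Ω A : Type*} [Fintype Ω] [Fintype A] [DecidableEq A]
    (p : Ω → ℝ) (X : Ω → A) : ℝ := ∑ a, Real.negMulLog (rvDist p X a)

/-- Conditional entropy `H(X | Y) = H(X,Y) - H(Y)`. -/
noncomputable def condEnt {Ω A B : Type*} [Fintype Ω] [Fintype A] [DecidableEq A]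
    [Fintype B] [DecidableEq B] (p : Ω → ℝ) (X : Ω → A) (Y : Ω → B) : ℝ :=
  ent p (fun ω => (X ω, Y ω)) - ent p Y

/-- Mutual information `I(X;Y) = H(X)+H(Y)-H(X,Y)`. -/
noncomputable def MI {Ω A B : Type*} [Fintype Ω] [Fintype A] [DecidableEq A]
    [Fintype B] [DecidableEq B] (p : Ω → ℝ) (X : Ω → A) (Y : Ω → B) : ℝ :=
  ent p X + ent p Y - ent p (fun ω => (X ω, Y ω))

/-- Conditional mutual information `I(X;Y|Z) = H(X|Z)+H(Y|Z)-H(X,Y|Z)`. -/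
noncomputable def CMI {Ω A B C : Type*} [Fintype Ω] [Fintype A] [DecidableEq A]
    [Fintype B] [DecidableEq B] [Fintype C] [DecidableEq C]
    (p : Ω → ℝ) (X : Ω → A) (Y : Ω → B) (Z : Ω → C) : ℝ :=
  condEnt p X Z + condEnt p Y Z - condEnt p (fun ω => (X ω, Y ω)) Z

/-- The prefix `x^i = (x_1, …, x_i)` of a random sequence, as a random variable. -/
def pre {Ω A : Type*} {n : ℕ} (x : Fin n → Ω → A) (i : ℕ) (h : i ≤ n) :
    Ω → (Fin i → A) := fun ω j => x (Fin.castLE h j) ω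

/-- Directed information `I(x^n → y^n) = ∑_{i=1}^n I(x^i; y_i | y^{i-1})`. -/
noncomputable def DI {Ω A B : Type*} [Fintype Ω] [Fintype A] [DecidableEq A]
    [Fintype B] [DecidableEq B] {n : ℕ}
    (p : Ω → ℝ) (x : Fin n → Ω → A) (y : Fin n → Ω → B) : ℝ :=
  ∑ i : Fin n, CMI p (pre x (i.1+1) i.isLt) (y i) (pre y i.1 i.isLt.le)

/-! ### Auxiliary lemmas -/

/-- Entropy is invariant under injective relabeling. -/
lemma ent_comp {Ω A B : Type*} [Fintype Ω] [Fintype A] [DecidableEq A]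
    [Fintype B] [DecidableEq B] (p : Ω → ℝ) (X : Ω → A) (f : A → B)
    (hf : Function.Injective f) :
    ent p (fun ω => f (X ω)) = ent p X := by
  have h1 : ∀ a, rvDist p (fun ω => f (X ω)) (f a) = rvDist p X a := by
    intro a
    unfold rvDist
    exact Finset.sum_congr rfl fun ω _ => by simp [hf.eq_iff]
  have h2 : ∀ b ∉ Finset.univ.image f, rvDist p (fun ω => f (X ω)) b = 0 := by
    intro b hb
    refine Finset.sum_eq_zero fun ω _ => ?_
    rw [if_neg]
    exact fun hc => hb (Finset.mem_image.mpr ⟨X ω, Finset.mem_univ _, hc⟩)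
  unfold ent
  rw [← Finset.sum_subset (Finset.subset_univ (Finset.univ.image f))
      (fun b _ hb => by rw [h2 b hb, Real.negMulLog_zero])]
  rw [Finset.sum_image (fun x _ y _ h => hf h)]
  exact Finset.sum_congr rfl fun a _ => by rw [h1]

/-- Entropy of a constant random variable is zero. -/
lemma ent_const {Ω A : Type*} [Fintype Ω] [Fintype A] [DecidableEq A]
    (p : Ω → ℝ) (hp1 : ∑ ω, p ω = 1) (c : A) :
    ent p (fun _ => c) = 0 := by
  have h : ∀ a, rvDist p (fun _ : Ω => c) a = if c = a then 1 else 0 := by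
    intro a; unfold rvDist
    split <;> simp_all
  unfold ent
  refine Finset.sum_eq_zero fun a _ => ?_
  rw [h a]; split <;> simp [Real.negMulLog_zero, Real.negMulLog_one]

lemma ent_ext {Ω A : Type*} [Fintype Ω] [Fintype A] [DecidableEq A]
    (p : Ω → ℝ) {X Y : Ω → A} (h : ∀ ω, X ω = Y ω) : ent p X = ent p Y :=
  congrArg (ent p) (funext h)

/-- Per-step decomposition: `I(Y;E|Z) = I(X;E|Z) + I(Y;E|Z,X)` given `I(X;E|Z,Y) = 0`. -/
lemma key_step {Ω M A B C : Type*} [Fintype Ω] [Fintype M] [DecidableEq M]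
    [Fintype A] [DecidableEq A] [Fintype B] [DecidableEq B] [Fintype C] [DecidableEq C]
    (p : Ω → ℝ) (X : Ω → M) (Y : Ω → A) (E : Ω → B) (Z : Ω → C)
    (h : CMI p X E (fun ω => (Z ω, Y ω)) = 0) :
    CMI p Y E Z = CMI p X E Z + CMI p Y E (fun ω => (Z ω, X ω)) := by
  have e1 : ent p (fun ω => (Y ω, (Z ω, X ω))) = ent p (fun ω => (X ω, (Z ω, Y ω))) :=
    ent_comp p (fun ω => (X ω, (Z ω, Y ω)))
      (fun q : M × (C × A) => (q.2.2, (q.2.1, q.1)))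
      (fun u v h => by simp [Prod.ext_iff] at h ⊢; tauto)
  have e2 : ent p (fun ω => (Z ω, X ω)) = ent p (fun ω => (X ω, Z ω)) :=
    ent_comp p (fun ω => (X ω, Z ω)) (fun q : M × C => (q.2, q.1))
      (fun u v h => by simp [Prod.ext_iff] at h ⊢; tauto)
  have e3 : ent p (fun ω => (E ω, (Z ω, X ω))) = ent p (fun ω => ((X ω, E ω), Z ω)) :=
    ent_comp p (fun ω => ((X ω, E ω), Z ω))
      (fun q : (M × B) × C => (q.1.2, (q.2, q.1.1)))
      (fun u v h => by simp [Prod.ext_iff] at h ⊢; tauto)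
  have e4 : ent p (fun ω => ((Y ω, E ω), (Z ω, X ω)))
      = ent p (fun ω => ((X ω, E ω), (Z ω, Y ω))) :=
    ent_comp p (fun ω => ((X ω, E ω), (Z ω, Y ω)))
      (fun q : (M × B) × (C × A) => ((q.2.2, q.1.2), (q.2.1, q.1.1)))
      (fun u v h => by simp [Prod.ext_iff] at h ⊢; tauto)
  have e5 : ent p (fun ω => (E ω, (Z ω, Y ω))) = ent p (fun ω => ((Y ω, E ω), Z ω)) :=
    ent_comp p (fun ω => ((Y ω, E ω), Z ω))
      (fun q : (A × B) × C => (q.1.2, (q.2, q.1.1)))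
      (fun u v h => by simp [Prod.ext_iff] at h ⊢; tauto)
  have e6 : ent p (fun ω => (Z ω, Y ω)) = ent p (fun ω => (Y ω, Z ω)) :=
    ent_comp p (fun ω => (Y ω, Z ω)) (fun q : A × C => (q.2, q.1))
      (fun u v h => by simp [Prod.ext_iff] at h ⊢; tauto)
  simp only [CMI, condEnt] at h ⊢
  linarith

/-- Splitting off the last coordinate of a tuple is injective. -/
lemma snoc_inj {B : Type*} (i : ℕ) :
    Function.Injective (fun v : Fin (i+1) → B =>
      (v ⟨i, Nat.lt_succ_self i⟩, fun j : Fin i => v ⟨j.1, Nat.lt_succ_of_lt j.2⟩)) := by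
  intro u v h
  simp only [Prod.mk.injEq] at h
  funext j
  by_cases hj : j.1 < i
  · exact congrFun h.2 ⟨j.1, hj⟩
  · have hlt := j.2
    have hj' : j = ⟨i, Nat.lt_succ_self i⟩ := Fin.ext (show j.1 = i by omega)
    rw [hj']; exact h.1

/-- Chain rule of mutual information, telescoped: `∑ I(x0; e_i | e^{i-1}) = I(x0; e^n)`. -/
lemma sum_chain {Ω M B : Type*} [Fintype Ω] [Fintype M] [DecidableEq M]
    [Fintype B] [DecidableEq B] {n : ℕ} (p : Ω → ℝ) (hp1 : ∑ ω, p ω = 1)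
    (x0 : Ω → M) (e : Fin n → Ω → B) :
    ∑ i : Fin n, CMI p x0 (e i) (pre e i.1 i.isLt.le) = MI p x0 (fun ω i => e i ω) := by
  set F : ℕ → ℝ := fun i =>
    if h : i ≤ n then
      ent p (pre e i h) - ent p (fun ω => (x0 ω, pre e i h ω))
    else 0 with hF
  have step : ∀ i : Fin n, CMI p x0 (e i) (pre e i.1 i.isLt.le) = F (i.1+1) - F i.1 := by
    intro i
    have h1 : (i.1 : ℕ) + 1 ≤ n := i.isLt
    have h0 : (i.1 : ℕ) ≤ n := i.isLt.le
    have ha : ent p (fun ω => (e i ω, pre e i.1 h0 ω)) = ent p (pre e (i.1+1) h1) :=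
      ent_comp p (pre e (i.1+1) h1)
        (fun v : Fin (i.1+1) → B =>
          (v ⟨i.1, Nat.lt_succ_self i.1⟩, fun j : Fin i.1 => v ⟨j.1, Nat.lt_succ_of_lt j.2⟩))
        (snoc_inj i.1)
    have hb : ent p (fun ω => ((x0 ω, e i ω), pre e i.1 h0 ω))
        = ent p (fun ω => (x0 ω, pre e (i.1+1) h1 ω)) :=
      ent_comp p (fun ω => (x0 ω, pre e (i.1+1) h1 ω))
        (fun q : M × (Fin (i.1+1) → B) =>
          ((q.1, q.2 ⟨i.1, Nat.lt_succ_self i.1⟩),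
            fun j : Fin i.1 => q.2 ⟨j.1, Nat.lt_succ_of_lt j.2⟩))
        (by
          intro u v h
          simp only [Prod.mk.injEq] at h
          obtain ⟨⟨h1', h2'⟩, h3'⟩ := h
          refine Prod.ext h1' ?_
          exact snoc_inj i.1 (by simp only [Prod.mk.injEq]; exact ⟨h2', h3'⟩))
    simp only [hF]
    rw [dif_pos h1, dif_pos h0]
    simp only [CMI, condEnt]
    linarith
  rw [Finset.sum_congr rfl (fun i _ => step i)]
  have hrange : ∑ i : Fin n, (F (i.1+1) - F i.1) = ∑ i ∈ Finset.range n, (F (i+1) - F i) :=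
    Fin.sum_univ_eq_sum_range (fun i => F (i+1) - F i) n
  rw [hrange, Finset.sum_range_sub F n]
  have hF0 : F 0 = -ent p x0 := by
    simp only [hF]
    rw [dif_pos (Nat.zero_le n)]
    have hc : ent p (pre e 0 (Nat.zero_le n)) = 0 := by
      rw [ent_ext p (Y := fun _ : Ω => (fun j : Fin 0 => j.elim0)) (fun ω => funext fun j => j.elim0)]
      exact ent_const p hp1 _
    have hd : ent p (fun ω => (x0 ω, pre e 0 (Nat.zero_le n) ω)) = ent p x0 := by
      rw [ent_ext p (Y := fun ω => (x0 ω, (fun j : Fin 0 => j.elim0)))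
        (fun ω => by refine Prod.ext rfl (funext fun j => j.elim0))]
      exact ent_comp p x0 (fun m => (m, fun j : Fin 0 => j.elim0))
        (fun u v h => (Prod.mk.injEq _ _ _ _ ▸ h : _ ∧ _).1)
    rw [hc, hd]; ring
  have hFn : F n = ent p (fun ω i => e i ω) - ent p (fun ω => (x0 ω, fun i => e i ω)) := by
    simp only [hF]
    rw [dif_pos (le_refl n)]
    rfl
  rw [hF0, hFn]
  simp only [MI]
  ring

/-- Lemma 2: under causality of the feedback channel,
`I(y^n → e^n) = I(x_0; e^n) + I(y^n → e^n | x_0)`. -/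
theorem lemma2_feedback_decomposition {Ω M A B : Type*} [Fintype Ω] [Fintype M] [DecidableEq M]
    [Fintype A] [DecidableEq A] [Fintype B] [DecidableEq B] {n : ℕ} (p : Ω → ℝ)
    (hp : ∀ ω, 0 ≤ p ω) (hp1 : ∑ ω, p ω = 1)
    (x0 : Ω → M) (y : Fin n → Ω → A) (e : Fin n → Ω → B)
    (hcausal : ∀ i : Fin n,
      CMI p x0 (e i) (fun ω => (pre e i.1 i.isLt.le ω, pre y (i.1+1) i.isLt ω)) = 0) :
    DI p y e = MI p x0 (fun ω i => e i ω) +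
      ∑ i : Fin n, CMI p (pre y (i.1+1) i.isLt) (e i)
        (fun ω => (pre e i.1 i.isLt.le ω, x0 ω)) := by
  have hstep : ∀ i : Fin n,
      CMI p (pre y (i.1+1) i.isLt) (e i) (pre e i.1 i.isLt.le)
        = CMI p x0 (e i) (pre e i.1 i.isLt.le)
          + CMI p (pre y (i.1+1) i.isLt) (e i)
              (fun ω => (pre e i.1 i.isLt.le ω, x0 ω)) :=
    fun i => key_step p x0 (pre y (i.1+1) i.isLt) (e i) (pre e i.1 i.isLt.le) (hcausal i)
  simp only [DI]
  rw [Finset.sum_congr rfl fun i _ => hstep i, Finset.sum_add_distrib,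
    sum_chain p hp1 x0 e]
end

section
/- Theorem 1 (conservation of information flows): Suppose random variables x_0, x^n, y^n, e^n satisfy: (i) x_i is a deterministic function of (x_0, e^{i-1}) for each i; (ii) I(x_0; e_i | e^{i-1}, x^i) = 0 for each i; (iii) I(x_0; e_i | e^{i-1}, y^i) = 0 for each i. Then I(y^n → e^n) = I(x^n → e^n) + I(y^n → e^n | x_0). -/
/-! For each index `i`, with `Z = e^{i-1}` and `E = e_i`, the chain rule applied to
`I(x_0, y^i; E | Z)` in both orders, together with (iii), gives
`I(y^i; E | Z) = I(x_0; E | Z) + I(y^i; E | Z, x_0)`. The same identity for `x^i`, using (ii),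
has a vanishing last term: a zero conditional entropy forces a variable to be a function of the
condition on the support of `p`, so by (i) `x^i` is a function of `(e^{i-1}, x_0)`. Hence
`I(x_0; E | Z) = I(x^i; E | Z)`, and summing over `i` gives the theorem. -/

open scoped BigOperators

open Finset Real Function

lemma Real.negMulLog_add_lt {x y : ℝ} (hx : 0 < x) (hy : 0 < y) :
    negMulLog (x + y) < negMulLog x + negMulLog y := by
  have hx' : x * log x < x * log (x + y) := by gcongr; linarith
  have hy' : y * log y < y * log (x + y) := by gcongr; linarith
  simp only [negMulLog]
  nlinarith

lemma Real.negMulLog_add_le {x y : ℝ} (hx : 0 ≤ x) (hy : 0 ≤ y) :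
    negMulLog (x + y) ≤ negMulLog x + negMulLog y := by
  rcases hx.eq_or_lt with rfl | hx
  · simp
  rcases hy.eq_or_lt with rfl | hy
  · simp
  exact (negMulLog_add_lt hx hy).le

lemma Real.negMulLog_sum_le {ι : Type*} (s : Finset ι) {d : ι → ℝ} (hd : ∀ i ∈ s, 0 ≤ d i) :
    negMulLog (∑ i ∈ s, d i) ≤ ∑ i ∈ s, negMulLog (d i) :=
  le_sum_of_subadditive_on_pred _ (0 ≤ ·) (by simp) (fun _ _ => negMulLog_add_le)
    (fun _ _ => add_nonneg) d hd

lemma Real.negMulLog_sum_lt {ι : Type*} [Fintype ι] {d : ι → ℝ} (hd : ∀ i, 0 ≤ d i) {i j : ι}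
    (hij : i ≠ j) (hi : 0 < d i) (hj : 0 < d j) :
    negMulLog (∑ k, d k) < ∑ k, negMulLog (d k) := by
  classical
  have hrest : 0 < ∑ k ∈ univ.erase i, d k :=
    hj.trans_le (single_le_sum (fun k _ => hd k) (mem_erase.2 ⟨hij.symm, mem_univ j⟩))
  rw [← add_sum_erase _ _ (mem_univ i), ← add_sum_erase _ _ (mem_univ i)]
  calc negMulLog (d i + ∑ k ∈ univ.erase i, d k)
      < negMulLog (d i) + negMulLog (∑ k ∈ univ.erase i, d k) := negMulLog_add_lt hi hrest
    _ ≤ negMulLog (d i) + ∑ k ∈ univ.erase i, negMulLog (d k) := by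
        gcongr
        exact negMulLog_sum_le _ fun k _ => hd k

lemma Real.sum_negMulLog_eq_negMulLog_sum {ι : Type*} [Fintype ι] {d : ι → ℝ}
    (hd : ∀ i j, d i ≠ 0 → d j ≠ 0 → i = j) :
    ∑ i, negMulLog (d i) = negMulLog (∑ i, d i) := by
  by_cases h : ∃ i, d i ≠ 0
  · obtain ⟨i, hi⟩ := h
    have hzero : ∀ j, j ≠ i → d j = 0 := fun j hj => by_contra fun h => hj (hd j i h hi)
    rw [Fintype.sum_eq_single i fun j hj => by rw [hzero j hj, negMulLog_zero],
      Fintype.sum_eq_single i hzero]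
  · push Not at h
    simp [h]

section Entropy

variable {Ω A B C D : Type*} [Fintype Ω] [Fintype A] [DecidableEq A] [Fintype B] [DecidableEq B]
  [Fintype C] [DecidableEq C] [Fintype D] [DecidableEq D] {p : Ω → ℝ}

lemma rvDist_nonneg (hp : ∀ ω, 0 ≤ p ω) (X : Ω → A) (a : A) : 0 ≤ rvDist p X a :=
  sum_nonneg fun ω _ => by split_ifs <;> simp [hp ω]

lemma rvDist_apply_pos (hp : ∀ ω, 0 ≤ p ω) (X : Ω → A) {ω : Ω} (hω : p ω ≠ 0) :
    0 < rvDist p X (X ω) := by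
  refine (lt_of_le_of_ne (hp ω) (Ne.symm hω)).trans_le ?_
  simpa [rvDist] using single_le_sum (f := fun ω' => if X ω' = X ω then p ω' else 0)
    (fun ω' _ => by split_ifs <;> simp [hp ω']) (mem_univ ω)

lemma exists_of_rvDist_ne_zero {X : Ω → A} {a : A} (h : rvDist p X a ≠ 0) :
    ∃ ω, p ω ≠ 0 ∧ X ω = a := by
  obtain ⟨ω, -, hω⟩ := exists_ne_zero_of_sum_ne_zero h
  by_cases hX : X ω = a
  · exact ⟨ω, by simpa [hX] using hω, hX⟩
  · simp [hX] at hω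

lemma sum_rvDist_pair (X : Ω → A) (W : Ω → B) (b : B) :
    ∑ a, rvDist p (fun ω => (X ω, W ω)) (a, b) = rvDist p W b := by
  unfold rvDist
  rw [sum_comm]
  refine sum_congr rfl fun ω _ => ?_
  by_cases hW : W ω = b <;> simp [Prod.ext_iff, hW]

lemma ent_comp_of_injective {f : A → B} (hf : Injective f) (X : Ω → A) :
    ent p (f ∘ X) = ent p X := by
  refine (Fintype.sum_of_injective f hf _ _ (fun b hb => ?_) fun a => ?_).symm
  · have hb' : ∀ ω, f (X ω) ≠ b := fun ω h => hb ⟨X ω, h⟩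
    simp [rvDist, hb']
  · simp only [rvDist, comp_apply, hf.eq_iff]

lemma condEnt_eq_sum (X : Ω → A) (W : Ω → B) :
    condEnt p X W = ∑ b, (∑ a, negMulLog (rvDist p (fun ω => (X ω, W ω)) (a, b))
      - negMulLog (∑ a, rvDist p (fun ω => (X ω, W ω)) (a, b))) := by
  simp only [condEnt, ent, sum_rvDist_pair, Fintype.sum_prod_type, sum_sub_distrib]
  rw [sum_comm]

def DeterminedBy (p : Ω → ℝ) (X : Ω → A) (W : Ω → B) : Prop :=
  ∀ ω ω', p ω ≠ 0 → p ω' ≠ 0 → W ω = W ω' → X ω = X ω'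

lemma DeterminedBy.of_condEnt_eq_zero (hp : ∀ ω, 0 ≤ p ω) {X : Ω → A} {W : Ω → B}
    (h : condEnt p X W = 0) : DeterminedBy p X W := by
  -- `H(X | W)` is a sum of nonnegative subadditivity gaps of `negMulLog`, one for each value
  -- `b` of `W`, and the gap at `b` is positive once two values of `X` occur together with `b`.
  set d : A → B → ℝ := fun a b => rvDist p (fun ω => (X ω, W ω)) (a, b)
  have hd : ∀ a b, 0 ≤ d a b := fun a b => rvDist_nonneg hp _ _
  have hgap : ∀ b, 0 ≤ ∑ a, negMulLog (d a b) - negMulLog (∑ a, d a b) :=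
    fun b => sub_nonneg.2 (negMulLog_sum_le _ fun a _ => hd a b)
  rw [condEnt_eq_sum] at h
  have hzero := (sum_eq_zero_iff_of_nonneg fun b _ => hgap b).1 h
  intro ω ω' hω hω' hW
  by_contra hX
  have hlt := negMulLog_sum_lt (fun a => hd a (W ω)) hX (rvDist_apply_pos hp _ hω)
    (hW ▸ rvDist_apply_pos hp (fun ω => (X ω, W ω)) hω')
  linarith [hzero (W ω) (mem_univ _)]

lemma DeterminedBy.ent_pair_eq {X : Ω → A} {W : Ω → B} (h : DeterminedBy p X W) :
    ent p (fun ω => (X ω, W ω)) = ent p W := by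
  rw [← sub_eq_zero, ← condEnt, condEnt_eq_sum]
  refine sum_eq_zero fun b _ => sub_eq_zero.2 (sum_negMulLog_eq_negMulLog_sum fun a a' ha ha' => ?_)
  obtain ⟨ω, hω, hXW⟩ := exists_of_rvDist_ne_zero ha
  obtain ⟨ω', hω', hXW'⟩ := exists_of_rvDist_ne_zero ha'
  simp only [Prod.ext_iff] at hXW hXW'
  rw [← hXW.1, ← hXW'.1, h ω ω' hω hω' (hXW.2.trans hXW'.2.symm)]

lemma CMI_eq_ent (X : Ω → A) (Y : Ω → B) (Z : Ω → C) :
    CMI p X Y Z = ent p (fun ω => (X ω, Z ω)) + ent p (fun ω => (Y ω, Z ω))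
      - ent p (fun ω => ((X ω, Y ω), Z ω)) - ent p Z := by
  simp only [CMI, condEnt]
  ring

lemma CMI_pair_left (X : Ω → A) (Y : Ω → B) (E : Ω → C) (Z : Ω → D) :
    CMI p (fun ω => (X ω, Y ω)) E Z = CMI p X E Z + CMI p Y E (fun ω => (Z ω, X ω)) := by
  have h₁ : ent p (fun ω => ((X ω, Y ω), Z ω)) = ent p (fun ω => (Y ω, Z ω, X ω)) :=
    ent_comp_of_injective (f := fun t : B × D × A => ((t.2.2, t.1), t.2.1))
      (fun _ _ h => by simp_all [Prod.ext_iff]) (fun ω => (Y ω, Z ω, X ω))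
  have h₂ : ent p (fun ω => (((X ω, Y ω), E ω), Z ω))
      = ent p (fun ω => ((Y ω, E ω), Z ω, X ω)) :=
    ent_comp_of_injective (f := fun t : (B × C) × D × A => (((t.2.2, t.1.1), t.1.2), t.2.1))
      (fun _ _ h => by simp_all [Prod.ext_iff]) (fun ω => ((Y ω, E ω), Z ω, X ω))
  have h₃ : ent p (fun ω => ((X ω, E ω), Z ω)) = ent p (fun ω => (E ω, Z ω, X ω)) :=
    ent_comp_of_injective (f := fun t : C × D × A => ((t.2.2, t.1), t.2.1))
      (fun _ _ h => by simp_all [Prod.ext_iff]) (fun ω => (E ω, Z ω, X ω))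
  have h₄ : ent p (fun ω => (X ω, Z ω)) = ent p (fun ω => (Z ω, X ω)) :=
    ent_comp_of_injective Prod.swap_injective (fun ω => (Z ω, X ω))
  rw [CMI_eq_ent, CMI_eq_ent, CMI_eq_ent]
  linarith

lemma CMI_pair_comm_left (X : Ω → A) (Y : Ω → B) (E : Ω → C) (Z : Ω → D) :
    CMI p (fun ω => (X ω, Y ω)) E Z = CMI p (fun ω => (Y ω, X ω)) E Z := by
  have h₁ : ent p (fun ω => ((X ω, Y ω), Z ω)) = ent p (fun ω => ((Y ω, X ω), Z ω)) :=
    ent_comp_of_injective (f := fun t : (B × A) × D => (t.1.swap, t.2))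
      (fun _ _ h => by simp_all [Prod.ext_iff]) (fun ω => ((Y ω, X ω), Z ω))
  have h₂ : ent p (fun ω => (((X ω, Y ω), E ω), Z ω))
      = ent p (fun ω => (((Y ω, X ω), E ω), Z ω)) :=
    ent_comp_of_injective (f := fun t : ((B × A) × C) × D => ((t.1.1.swap, t.1.2), t.2))
      (fun _ _ h => by simp_all [Prod.ext_iff]) (fun ω => (((Y ω, X ω), E ω), Z ω))
  rw [CMI_eq_ent, CMI_eq_ent, h₁, h₂]

lemma CMI_eq_zero_of_determinedBy {X : Ω → A} (Y : Ω → B) {Z : Ω → C}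
    (h : DeterminedBy p X Z) : CMI p X Y Z = 0 := by
  have hYZ : DeterminedBy p X (fun ω => (Y ω, Z ω)) :=
    fun ω ω' hω hω' hW => h ω ω' hω hω' (congrArg Prod.snd hW)
  have hassoc : ent p (fun ω => ((X ω, Y ω), Z ω)) = ent p (fun ω => (X ω, Y ω, Z ω)) :=
    ent_comp_of_injective (f := fun t : A × B × C => ((t.1, t.2.1), t.2.2))
      (fun _ _ h => by simp_all [Prod.ext_iff]) (fun ω => (X ω, Y ω, Z ω))
  rw [CMI_eq_ent, hassoc, h.ent_pair_eq, hYZ.ent_pair_eq]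
  ring

lemma CMI_eq_add_of_CMI_eq_zero (x₀ : Ω → A) (Y : Ω → B) (E : Ω → C) (Z : Ω → D)
    (h : CMI p x₀ E (fun ω => (Z ω, Y ω)) = 0) :
    CMI p Y E Z = CMI p x₀ E Z + CMI p Y E (fun ω => (Z ω, x₀ ω)) := by
  have hchain := CMI_pair_left (p := p) Y x₀ E Z
  rw [CMI_pair_comm_left, CMI_pair_left, h] at hchain
  linarith

lemma CMI_eq_of_determinedBy (x₀ : Ω → A) (X : Ω → B) (E : Ω → C) (Z : Ω → D)
    (hX : DeterminedBy p X (fun ω => (Z ω, x₀ ω)))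
    (h : CMI p x₀ E (fun ω => (Z ω, X ω)) = 0) : CMI p X E Z = CMI p x₀ E Z := by
  rw [CMI_eq_add_of_CMI_eq_zero x₀ X E Z h, CMI_eq_zero_of_determinedBy E hX, add_zero]

end Entropy

lemma determinedBy_pre {Ω M A C : Type*} {n : ℕ} {p : Ω → ℝ} {x₀ : Ω → M}
    {x : Fin n → Ω → A} {e : Fin n → Ω → C}
    (h : ∀ j : Fin n, DeterminedBy p (x j) (fun ω => (x₀ ω, pre e j.1 j.isLt.le ω))) (i : Fin n) :
    DeterminedBy p (pre x (i.1 + 1) i.isLt) (fun ω => (pre e i.1 i.isLt.le ω, x₀ ω)) := by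
  intro ω ω' hω hω' hW
  funext j
  refine h (Fin.castLE i.isLt j) ω ω' hω hω' (Prod.ext (congrArg Prod.snd hW) ?_)
  funext k
  exact congrFun (congrArg Prod.fst hW) (Fin.castLE (Nat.lt_succ_iff.mp j.isLt) k)

theorem conservation_of_information_flows_general {Ω M A B C : Type*} [Fintype Ω]
    [Fintype M] [DecidableEq M] [Fintype A] [DecidableEq A]
    [Fintype B] [DecidableEq B] [Fintype C] [DecidableEq C] {n : ℕ} (p : Ω → ℝ)
    (hp : ∀ ω, 0 ≤ p ω)
    (x0 : Ω → M) (x : Fin n → Ω → A) (y : Fin n → Ω → B) (e : Fin n → Ω → C)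
    (hdet : ∀ i : Fin n, condEnt p (x i) (fun ω => (x0 ω, pre e i.1 i.isLt.le ω)) = 0)
    (hmarkov : ∀ i : Fin n,
      CMI p x0 (e i) (fun ω => (pre e i.1 i.isLt.le ω, pre x (i.1+1) i.isLt ω)) = 0)
    (hcausal : ∀ i : Fin n,
      CMI p x0 (e i) (fun ω => (pre e i.1 i.isLt.le ω, pre y (i.1+1) i.isLt ω)) = 0) :
    DI p y e = DI p x e +
      ∑ i : Fin n, CMI p (pre y (i.1+1) i.isLt) (e i)
        (fun ω => (pre e i.1 i.isLt.le ω, x0 ω)) := by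
  have hx := determinedBy_pre fun j => DeterminedBy.of_condEnt_eq_zero hp (hdet j)
  rw [DI, DI, ← sum_add_distrib]
  refine sum_congr rfl fun i _ => ?_
  rw [CMI_eq_add_of_CMI_eq_zero x0 _ _ _ (hcausal i),
    CMI_eq_of_determinedBy x0 _ _ _ (hx i) (hmarkov i)]

/-- Theorem 1, conservation of information flows:
`I(y^n → e^n) = I(x^n → e^n) + I(y^n → e^n | x_0)`. -/
theorem conservation_of_information_flows {Ω M A B C : Type*} [Fintype Ω]
    [Fintype M] [DecidableEq M] [Fintype A] [DecidableEq A]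
    [Fintype B] [DecidableEq B] [Fintype C] [DecidableEq C] {n : ℕ} (p : Ω → ℝ)
    (hp : ∀ ω, 0 ≤ p ω) (hp1 : ∑ ω, p ω = 1)
    (x0 : Ω → M) (x : Fin n → Ω → A) (y : Fin n → Ω → B) (e : Fin n → Ω → C)
    (hdet : ∀ i : Fin n, condEnt p (x i) (fun ω => (x0 ω, pre e i.1 i.isLt.le ω)) = 0)
    (hmarkov : ∀ i : Fin n,
      CMI p x0 (e i) (fun ω => (pre e i.1 i.isLt.le ω, pre x (i.1+1) i.isLt ω)) = 0)
    (hcausal : ∀ i : Fin n,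
      CMI p x0 (e i) (fun ω => (pre e i.1 i.isLt.le ω, pre y (i.1+1) i.isLt ω)) = 0) :
    DI p y e = DI p x e +
      ∑ i : Fin n, CMI p (pre y (i.1+1) i.isLt) (e i)
        (fun ω => (pre e i.1 i.isLt.le ω, x0 ω)) :=
  conservation_of_information_flows_general p hp x0 x y e hdet hmarkov hcausal
end
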